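/- (Sensitivities of active power injections to admittance parameters.) Fix a node k ∈ Fin n. For a branch e = (i, j) ∈ ℰ, the partial derivative of the active power injection p_k(g, b) with respect to the branch conductance g_e (all other parameters held fixed) equals v_i² − v_i v_j cos(δ_i − δ_j) if k = i, equals v_j² − v_i v_j cos(δ_i − δ_j) if k = j, and equals 0 if k ∉ {i, j}; the partial derivative of p_k with respect to the branch susceptance b_e equals −v_i v_j sin(δ_i − δ_j) if k = i, equals v_i v_j sin(δ_i − δ_j) if k = j, and equals 0 if k ∉ {i, j}. For a shunt element at node l, the partial derivative of p_k with respect to the shunt conductance g_l equals v_k² if k = l and 0 otherwise, and the partial derivative of p_k with respect to the shunt susceptance b_l equals 0. -/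
import Mathlib


open Matrix

/-- The branches of the complete graph on `n` nodes: ordered pairs `(i, j)` with `i < j`. -/
abbrev Branch (n : ℕ) := {p : Fin n × Fin n // p.1 < p.2}

/-- The complete-graph incidence matrix with self-loops `𝒜ₙ`. -/
def completeIncidence (n : ℕ) : Matrix (Branch n ⊕ Fin n) (Fin n) ℂ :=
  Matrix.of fun r c =>
    match r with
    | Sum.inl e => if c = e.val.1 then 1 else if c = e.val.2 then -1 else 0
    | Sum.inr k => if c = k then 1 else 0

/-- `F(x) = diag (conj x) ⬝ 𝒜ₙᵀ ⬝ diag (𝒜ₙ *ᵥ x)`. -/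
noncomputable def Fmat (n : ℕ) (x : Fin n → ℂ) : Matrix (Fin n) (Branch n ⊕ Fin n) ℂ :=
  Matrix.diagonal (fun i => (starRingEnd ℂ) (x i)) * (completeIncidence n)ᵀ *
    Matrix.diagonal (completeIncidence n *ᵥ x)

/-- The active bus power injection `p_k (g, b) = Re ((F(x) *ᵥ (g + j b))_k)` where
`x_i = v_i exp (j δ_i)`. -/
noncomputable def activeInjection (n : ℕ) (v δ : Fin n → ℝ) (g b : Branch n ⊕ Fin n → ℝ) (k : Fin n) : ℝ :=
  ((Fmat n (fun i => (v i : ℂ) * Complex.exp (Complex.I * (δ i : ℂ))) *ᵥ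
      (fun e => (g e : ℂ) + Complex.I * (b e : ℂ))) k).re


-- generic derivative lemma
lemma hasDerivAt_sum_update {ι : Type*} [Fintype ι] [DecidableEq ι]
    (c g : ι → ℝ) (r0 : ι) :
    HasDerivAt (fun t : ℝ => ∑ r, c r * Function.update g r0 t r) (c r0) (g r0) := by
  have h : (fun t : ℝ => ∑ r, c r * Function.update g r0 t r)
      = fun t : ℝ => c r0 * (t - g r0) + ∑ r, c r * g r := by
    funext t
    have : ∀ r, c r * Function.update g r0 t r
        = (if r = r0 then c r0 * (t - g r0) else 0) + c r * g r := by
      intro r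
      rcases eq_or_ne r r0 with h | h
      · subst h; simp [Function.update_self]; ring
      · simp [Function.update_of_ne h, h]
    simp only [this, Finset.sum_add_distrib, Finset.sum_ite_eq', Finset.mem_univ, if_true]
  rw [h]
  have : HasDerivAt (fun t : ℝ => c r0 * (t - g r0)) (c r0) (g r0) := by
    simpa using (((hasDerivAt_id (g r0)).sub_const (g r0)).const_mul (c r0))
  exact this.add_const _

lemma Fmat_apply (n : ℕ) (x : Fin n → ℂ) (k : Fin n) (r : Branch n ⊕ Fin n) :
    Fmat n x k r = (starRingEnd ℂ) (x k) * completeIncidence n r k *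
      (completeIncidence n *ᵥ x) r := by
  simp [Fmat, Matrix.mul_diagonal, Matrix.diagonal_mul, Matrix.transpose_apply]

lemma mv_inl (n : ℕ) (x : Fin n → ℂ) (e : Branch n) :
    (completeIncidence n *ᵥ x) (Sum.inl e) = x e.val.1 - x e.val.2 := by
  have hij : e.val.1 ≠ e.val.2 := ne_of_lt e.prop
  have : ∀ c : Fin n, (completeIncidence n) (Sum.inl e) c * x c
      = (if c = e.val.1 then x e.val.1 else 0) + (if c = e.val.2 then -x e.val.2 else 0) := by
    intro c
    rcases eq_or_ne c e.val.1 with h1 | h1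
    · subst h1; simp [completeIncidence, hij]
    · rcases eq_or_ne c e.val.2 with h2 | h2
      · subst h2; simp [completeIncidence, h1]
      · simp [completeIncidence, h1, h2]
  simp only [Matrix.mulVec, dotProduct, this, Finset.sum_add_distrib,
    Finset.sum_ite_eq', Finset.mem_univ, if_true]
  ring

lemma mv_inr (n : ℕ) (x : Fin n → ℂ) (l : Fin n) :
    (completeIncidence n *ᵥ x) (Sum.inr l) = x l := by
  simp only [Matrix.mulVec, dotProduct, completeIncidence, Matrix.of_apply,
    ite_mul, one_mul, zero_mul, Finset.sum_ite_eq', Finset.mem_univ, if_true]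

noncomputable def X (n : ℕ) (v δ : Fin n → ℝ) : Fin n → ℂ :=
  fun i => (v i : ℂ) * Complex.exp (Complex.I * (δ i : ℂ))

lemma X_eq (n : ℕ) (v δ : Fin n → ℝ) (a : Fin n) :
    X n v δ a = ((v a * Real.cos (δ a) : ℝ) : ℂ) + ((v a * Real.sin (δ a) : ℝ) : ℂ) * Complex.I := by
  rw [X, mul_comm Complex.I, Complex.exp_mul_I]
  push_cast
  ring

lemma re_conj_mul (n : ℕ) (v δ : Fin n → ℝ) (a c : Fin n) :
    ((starRingEnd ℂ) (X n v δ a) * X n v δ c).re = v a * v c * Real.cos (δ c - δ a) := by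
  rw [X_eq, X_eq, Real.cos_sub]
  simp [Complex.mul_re, Complex.mul_im, Complex.cos_ofReal_re, Complex.sin_ofReal_re]
  ring

lemma im_conj_mul (n : ℕ) (v δ : Fin n → ℝ) (a c : Fin n) :
    ((starRingEnd ℂ) (X n v δ a) * X n v δ c).im = v a * v c * Real.sin (δ c - δ a) := by
  rw [X_eq, X_eq, Real.sin_sub]
  simp [Complex.mul_re, Complex.mul_im, Complex.cos_ofReal_re, Complex.sin_ofReal_re]
  ring


lemma X_re (n : ℕ) (v δ : Fin n → ℝ) (a : Fin n) :
    (X n v δ a).re = v a * Real.cos (δ a) := by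
  rw [X_eq]; simp [Complex.cos_ofReal_re, Complex.sin_ofReal_re]

lemma X_im (n : ℕ) (v δ : Fin n → ℝ) (a : Fin n) :
    (X n v δ a).im = v a * Real.sin (δ a) := by
  rw [X_eq]; simp [Complex.cos_ofReal_re, Complex.sin_ofReal_re]

lemma activeInjection_expand (n : ℕ) (v δ : Fin n → ℝ) (g b : Branch n ⊕ Fin n → ℝ) (k : Fin n) :
    activeInjection n v δ g b k
      = ∑ r, ((Fmat n (X n v δ) k r).re * g r + (-(Fmat n (X n v δ) k r).im) * b r) := by
  rw [activeInjection]
  rw [show (fun i => (v i : ℂ) * Complex.exp (Complex.I * (δ i : ℂ))) = X n v δ from rfl]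
  rw [Matrix.mulVec, dotProduct, Complex.re_sum]
  refine Finset.sum_congr rfl fun r _ => ?_
  simp [Complex.mul_re, Complex.add_re, Complex.add_im, Complex.mul_im]
  ring


/-- **Sensitivities of active power injections to admittance parameters.**
For a branch `e = (i, j)`, `∂p_k/∂g_e = v_i² - v_i v_j cos (δ_i - δ_j)` if `k = i`,
`v_j² - v_i v_j cos (δ_i - δ_j)` if `k = j`, and `0` otherwise, while
`∂p_k/∂b_e = -v_i v_j sin (δ_i - δ_j)` if `k = i`, `v_i v_j sin (δ_i - δ_j)` if `k = j`, and
`0` otherwise. For a shunt at node `l`, `∂p_k/∂g_l = v_k²` if `k = l` and `0` otherwise, and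
`∂p_k/∂b_l = 0`. -/
theorem active_injection_admittance_sensitivities (n : ℕ) (v δ : Fin n → ℝ)
    (g b : Branch n ⊕ Fin n → ℝ) (k : Fin n) :
    (∀ e : Branch n,
      HasDerivAt (fun t : ℝ => activeInjection n v δ (Function.update g (Sum.inl e) t) b k)
        (if k = e.val.1 then
          v e.val.1 ^ 2 - v e.val.1 * v e.val.2 * Real.cos (δ e.val.1 - δ e.val.2)
        else if k = e.val.2 then
          v e.val.2 ^ 2 - v e.val.1 * v e.val.2 * Real.cos (δ e.val.1 - δ e.val.2)
        else 0)
        (g (Sum.inl e)) ∧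
      HasDerivAt (fun t : ℝ => activeInjection n v δ g (Function.update b (Sum.inl e) t) k)
        (if k = e.val.1 then
          -(v e.val.1 * v e.val.2 * Real.sin (δ e.val.1 - δ e.val.2))
        else if k = e.val.2 then
          v e.val.1 * v e.val.2 * Real.sin (δ e.val.1 - δ e.val.2)
        else 0)
        (b (Sum.inl e))) ∧
    (∀ l : Fin n,
      HasDerivAt (fun t : ℝ => activeInjection n v δ (Function.update g (Sum.inr l) t) b k)
        (if k = l then v k ^ 2 else 0) (g (Sum.inr l)) ∧
      HasDerivAt (fun t : ℝ => activeInjection n v δ g (Function.update b (Sum.inr l) t) k)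
        0 (b (Sum.inr l))) := by
  set F := Fmat n (X n v δ) with hF
  have hg : ∀ r0 : Branch n ⊕ Fin n,
      HasDerivAt (fun t : ℝ => activeInjection n v δ (Function.update g r0 t) b k)
        ((F k r0).re) (g r0) := by
    intro r0
    have hfun : (fun t : ℝ => activeInjection n v δ (Function.update g r0 t) b k)
        = fun t : ℝ => (∑ r, (F k r).re * Function.update g r0 t r)
            + ∑ r, (-(F k r).im) * b r := by
      funext t
      rw [activeInjection_expand, Finset.sum_add_distrib]
    rw [hfun]
    exact (hasDerivAt_sum_update (fun r => (F k r).re) g r0).add_const _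
  have hb : ∀ r0 : Branch n ⊕ Fin n,
      HasDerivAt (fun t : ℝ => activeInjection n v δ g (Function.update b r0 t) k)
        (-(F k r0).im) (b r0) := by
    intro r0
    have hfun : (fun t : ℝ => activeInjection n v δ g (Function.update b r0 t) k)
        = fun t : ℝ => (∑ r, (-(F k r).im) * Function.update b r0 t r)
            + ∑ r, (F k r).re * g r := by
      funext t
      rw [activeInjection_expand, Finset.sum_add_distrib, add_comm]
    rw [hfun]
    exact (hasDerivAt_sum_update (fun r => -(F k r).im) b r0).add_const _
  
  refine ⟨fun e => ⟨?_, ?_⟩, fun l => ⟨?_, ?_⟩⟩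
  · convert hg (Sum.inl e) using 1
    have hij : e.val.1 ≠ e.val.2 := ne_of_lt e.prop
    rw [hF, Fmat_apply, mv_inl]
    rcases eq_or_ne k e.val.1 with h1 | h1
    · subst h1
      rw [if_pos rfl]
      simp [completeIncidence, Complex.mul_re, Complex.mul_im, X_re, X_im,
        Real.cos_sub, Real.sin_sub]
      linear_combination (-(v e.val.1 ^ 2)) * Real.sin_sq_add_cos_sq (δ e.val.1)
    · rcases eq_or_ne k e.val.2 with h2 | h2
      · subst h2
        rw [if_neg h1, if_pos rfl]
        simp [completeIncidence, h1, Complex.mul_re, Complex.mul_im, X_re, X_im,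
          Real.cos_sub, Real.sin_sub]
        linear_combination (-(v e.val.2 ^ 2)) * Real.sin_sq_add_cos_sq (δ e.val.2)
      · simp [completeIncidence, h1, h2]
  · convert hb (Sum.inl e) using 1
    have hij : e.val.1 ≠ e.val.2 := ne_of_lt e.prop
    rw [hF, Fmat_apply, mv_inl]
    rcases eq_or_ne k e.val.1 with h1 | h1
    · subst h1
      rw [if_pos rfl]
      simp [completeIncidence, Complex.mul_re, Complex.mul_im, X_re, X_im,
        Real.cos_sub, Real.sin_sub]
      try ring
    · rcases eq_or_ne k e.val.2 with h2 | h2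
      · subst h2
        rw [if_neg h1, if_pos rfl]
        simp [completeIncidence, h1, Complex.mul_re, Complex.mul_im, X_re, X_im,
          Real.cos_sub, Real.sin_sub]
        try ring
      · simp [completeIncidence, h1, h2]
  · convert hg (Sum.inr l) using 1
    rw [hF, Fmat_apply, mv_inr]
    rcases eq_or_ne k l with h | h
    · subst h
      rw [if_pos rfl]
      simp [completeIncidence, Complex.mul_re, Complex.mul_im, X_re, X_im]
      linear_combination (-(v k ^ 2)) * Real.sin_sq_add_cos_sq (δ k)
    · simp [completeIncidence, h]
  · convert hb (Sum.inr l) using 1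
    rw [hF, Fmat_apply, mv_inr]
    rcases eq_or_ne k l with h | h
    · subst h
      simp [completeIncidence, Complex.mul_re, Complex.mul_im, X_re, X_im]
      try ring
    · simp [completeIncidence, h]
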